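/- arXiv:2009.06162 — 7 statements merged into one kernel-verified Lean document; each statement's English description precedes it below -/
import Mathlib

section
/- Let x_1, ..., x_k be independent variables and let e_1, ..., e_k denote the elementary symmetric polynomials in the x_i's of degrees 1, 2, ..., k respectively. Then in the polynomial ring K[x_1, ..., x_k] over a field K of characteristic 0, for each positive integer n one has the identity: the sum over all tuples (r_1, ..., r_k) of non-negative integers with r_1 + r_2 + ... + r_k = n of x_1^{r_1} x_2^{r_2} ··· x_k^{r_k} equals the sum over all tuples of non-negative integers (i_2, ..., i_k) with 2i_2 + 3i_3 + ... + k·i_k ≤ n of c(i_2, ..., i_k, n) · e_1^{n-2i_2-3i_3-...-k·i_k} · (-e_2)^{i_2} · e_3^{i_3} ··· ((-1)^{k-1} e_k)^{i_k}, where c(i_2, ..., i_k, n) = (n - i_2 - 2i_3 - ... - (k-1)i_k)! / (i_2! ··· i_k! · (n - 2i_2 - 3i_3 - ... - k·i_k)!). -/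
/-!
In `R⟦t⟧` with `R = K[x_1, …, x_k]`, the sum of all monomials of degree `n` is the coefficient of
`t^n` in `∏ i, (1 - x_i t)⁻¹ = (1 - Q)⁻¹`, where by Vieta `Q = e_1 t - e_2 t² + ⋯ ± e_k t^k`.
As `Q` has no constant term, that coefficient is the one of `∑_{m ≤ n} Q^m`, and the multinomial
theorem expands `Q^m` as a sum over exponents `(i_1, …, i_k)` with `i_1 + ⋯ + i_k = m` and
`i_1 + 2 i_2 + ⋯ + k i_k = n`. The second equation determines `i_1`, and then
`m = n - i_2 - 2 i_3 - ⋯ - (k-1) i_k`, so the multinomial coefficient is `c(i_2, …, i_k, n)`.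
-/

open MvPolynomial Finset

theorem Finset.sum_finsuppAntidiag_eq_sum_piAntidiag {ι M : Type*} [DecidableEq ι]
    [AddCommMonoid M] (s : Finset ι) (n : ℕ) (f : (ι → ℕ) → M) :
    ∑ l ∈ finsuppAntidiag s n, f l = ∑ l ∈ piAntidiag s n, f l := by
  rw [finsuppAntidiag, sum_map]
  exact sum_attach (piAntidiag s n) f

namespace PowerSeries

open scoped PowerSeries

variable {R ι : Type*}

section CommSemiring

variable [CommSemiring R]

theorem coeff_prod_mk_pow [DecidableEq ι] (s : Finset ι) (a : ι → R) (n : ℕ) :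
    coeff n (∏ i ∈ s, mk fun m => a i ^ m) = ∑ r ∈ piAntidiag s n, ∏ i ∈ s, a i ^ r i := by
  rw [coeff_prod, sum_finsuppAntidiag_eq_sum_piAntidiag s n fun r =>
    ∏ i ∈ s, coeff (r i) (mk fun m => a i ^ m)]
  simp only [coeff_mk]

theorem coeff_sum_C_mul_X_pow_pow [DecidableEq ι] (s : Finset ι) (a : ι → R) (w : ι → ℕ)
    (m n : ℕ) :
    coeff n ((∑ i ∈ s, C (a i) * X ^ w i) ^ m) =
      ∑ d ∈ piAntidiag s m with ∑ i ∈ s, w i * d i = n,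
        (Nat.multinomial s d : R) * ∏ i ∈ s, a i ^ d i := by
  rw [sum_pow_eq_sum_piAntidiag, map_sum, sum_filter]
  refine sum_congr rfl fun d _ => ?_
  have hmonomial : ∏ i ∈ s, (C (a i) * X ^ w i) ^ d i =
      C (∏ i ∈ s, a i ^ d i) * X ^ ∑ i ∈ s, w i * d i := by
    simp only [mul_pow, prod_mul_distrib, ← pow_mul, prod_pow_eq_pow_sum, map_prod, map_pow]
  rw [hmonomial, ← map_natCast (C (R := R)), ← mul_assoc, ← map_mul, coeff_C_mul_X_pow]
  simp only [eq_comm]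

end CommSemiring

section CommRing

variable [CommRing R]

theorem mk_pow_mul_one_sub_C_mul_X (a : R) : (mk fun m => a ^ m) * (1 - C a * X) = 1 := by
  simpa [rescale_mk, rescale_X] using congrArg (rescale a) (mk_one_mul_one_sub_eq_one (S := R))

theorem prod_one_sub_C_mul_X (s : Finset ι) (a : ι → R) :
    ∏ i ∈ s, (1 - C (a i) * X) =
      ∑ j ∈ range (#s + 1), C ((-1) ^ j * (s.val.map a).esymm j) * X ^ j := by
  simp only [sub_eq_add_neg, prod_one_add, sum_powerset, Finset.esymm_map_val, mul_sum, map_sum,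
    sum_mul]
  refine sum_congr rfl fun j _ => sum_congr rfl fun t ht => ?_
  rw [← (mem_powersetCard.1 ht).2]
  simp only [prod_neg, prod_mul_distrib, prod_const, map_mul, map_pow, map_neg, map_one, map_prod]
  ring

theorem coeff_eq_sum_coeff_pow_of_mul_one_sub_eq_one {G Q : R⟦X⟧} (hG : G * (1 - Q) = 1)
    (hQ : constantCoeff Q = 0) (n : ℕ) :
    coeff n G = ∑ m ∈ range (n + 1), coeff n (Q ^ m) := by
  have hdecomp : G = ∑ m ∈ range (n + 1), Q ^ m + G * Q ^ (n + 1) := by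
    linear_combination (∑ m ∈ range (n + 1), Q ^ m) * hG - G * geom_sum_mul_neg Q (n + 1)
  have htail : coeff n (G * Q ^ (n + 1)) = 0 :=
    X_pow_dvd_iff.1 ((pow_dvd_pow_of_dvd (X_dvd_iff.2 hQ) _).mul_left _) n n.lt_succ_self
  rw [hdecomp, map_add, htail, add_zero, map_sum]

end CommRing

end PowerSeries

namespace MvPolynomial

variable (R : Type*) [CommRing R]

theorem prod_one_sub_C_X_mul_X (k : ℕ) :
    ∏ i : Fin k, (1 - PowerSeries.C (X i : MvPolynomial (Fin k) R) * PowerSeries.X) =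
      1 - ∑ j : Fin k, PowerSeries.C ((-1) ^ (j : ℕ) * esymm (Fin k) R (j + 1)) *
        PowerSeries.X ^ ((j : ℕ) + 1) := by
  rw [PowerSeries.prod_one_sub_C_mul_X, ← esymm_eq_multiset_esymm, card_univ, Fintype.card_fin,
    sum_range_succ', Fin.sum_univ_eq_sum_range
      (fun j => PowerSeries.C ((-1) ^ j * esymm (Fin k) R (j + 1)) * PowerSeries.X ^ (j + 1))]
  simp only [pow_zero, esymm_zero, mul_one, map_one, pow_succ (-1 : MvPolynomial (Fin k) R),
    mul_neg_one, neg_mul, map_neg, sum_neg_distrib]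
  abel

theorem sum_antidiagonalTuple_prod_X_pow_eq_sum_multinomial (k n : ℕ) :
    ∑ r ∈ Finset.Nat.antidiagonalTuple k n, ∏ i, (X i : MvPolynomial (Fin k) R) ^ r i =
      ∑ m ∈ range (n + 1), ∑ d ∈ piAntidiag (univ : Finset (Fin k)) m with
          ∑ j : Fin k, ((j : ℕ) + 1) * d j = n,
        (Nat.multinomial univ d : MvPolynomial (Fin k) R) *
          ∏ j : Fin k, ((-1) ^ (j : ℕ) * esymm (Fin k) R (j + 1)) ^ d j := by
  set Q := ∑ j : Fin k,
    PowerSeries.C ((-1) ^ (j : ℕ) * esymm (Fin k) R (j + 1)) * PowerSeries.X ^ ((j : ℕ) + 1)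
  have hG : (∏ i : Fin k, PowerSeries.mk fun m => (X i : MvPolynomial (Fin k) R) ^ m) *
      (1 - Q) = 1 := by
    rw [← prod_one_sub_C_X_mul_X, ← prod_mul_distrib]
    exact prod_eq_one fun i _ => PowerSeries.mk_pow_mul_one_sub_C_mul_X _
  have hQ : PowerSeries.constantCoeff Q = 0 := by simp [Q]
  rw [← piAntidiag_univ_fin_eq_antidiagonalTuple, ← PowerSeries.coeff_prod_mk_pow,
    PowerSeries.coeff_eq_sum_coeff_pow_of_mul_one_sub_eq_one hG hQ]
  simp only [Q, PowerSeries.coeff_sum_C_mul_X_pow_pow]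

end MvPolynomial

theorem Nat.multinomial_univ_fin_cons {k : ℕ} (a : ℕ) (w : Fin k → ℕ) :
    Nat.multinomial univ (Fin.cons a w : Fin (k + 1) → ℕ) =
      (a + ∑ j, w j).factorial / ((∏ j, (w j).factorial) * a.factorial) := by
  rw [Nat.multinomial, Fin.sum_cons, Fin.prod_univ_succ, Fin.cons_zero, mul_comm]
  simp only [Fin.cons_succ]

namespace Fin

variable {k : ℕ}

theorem sum_add_two_mul (w : Fin k → ℕ) :
    ∑ j : Fin k, ((j : ℕ) + 2) * w j = ∑ j : Fin k, ((j : ℕ) + 1) * w j + ∑ j, w j := by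
  rw [← sum_add_distrib]
  exact sum_congr rfl fun j _ => by ring

theorem sum_add_one_mul_cons (a : ℕ) (w : Fin k → ℕ) :
    ∑ j : Fin (k + 1), ((j : ℕ) + 1) * (cons a w : Fin (k + 1) → ℕ) j =
      a + ∑ j : Fin k, ((j : ℕ) + 2) * w j := by
  simp only [sum_univ_succ, cons_zero, cons_succ, val_zero, val_succ, zero_add, one_mul]

end Fin

theorem sum_range_sum_piAntidiag_weighted_eq_sum_cons {M : Type*} [AddCommMonoid M] (k n : ℕ)
    (F : (Fin (k + 1) → ℕ) → M) :
    ∑ m ∈ range (n + 1), ∑ d ∈ piAntidiag (univ : Finset (Fin (k + 1))) m with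
        ∑ j : Fin (k + 1), ((j : ℕ) + 1) * d j = n, F d =
      ∑ v : Fin k → Fin (n + 1) with ∑ j : Fin k, ((j : ℕ) + 2) * (v j : ℕ) ≤ n,
        F (Fin.cons (n - ∑ j : Fin k, ((j : ℕ) + 2) * (v j : ℕ)) fun j => (v j : ℕ)) := by
  rw [← sum_fiberwise_of_maps_to (t := range (n + 1))
    (g := fun v : Fin k → Fin (n + 1) => n - ∑ j : Fin k, ((j : ℕ) + 1) * (v j : ℕ))
    fun v _ => mem_range.2 (by omega)]
  refine sum_congr rfl fun m _ => (sum_bij (fun v _ => Fin.cons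
    (n - ∑ j : Fin k, ((j : ℕ) + 2) * (v j : ℕ)) fun j => (v j : ℕ)) ?_ ?_ ?_ fun _ _ => rfl).symm
  · intro v hv
    simp only [mem_filter, mem_univ, true_and] at hv
    have := Fin.sum_add_two_mul fun j => (v j : ℕ)
    simp only [mem_filter, mem_piAntidiag, Fin.sum_cons, Fin.sum_add_one_mul_cons, mem_univ,
      implies_true, and_true]
    omega
  · intro v _ v' _ h
    funext j
    exact Fin.ext (congrFun (Fin.cons_injective2 h).2 j)
  · intro d hd
    obtain ⟨a, w, rfl⟩ : ∃ a w, d = Fin.cons a w := ⟨d 0, Fin.tail d, (Fin.cons_self_tail d).symm⟩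
    simp only [mem_filter, mem_piAntidiag, Fin.sum_cons, Fin.sum_add_one_mul_cons, mem_univ,
      implies_true, and_true] at hd
    have hsplit := Fin.sum_add_two_mul w
    have hw (j : Fin k) : w j < n + 1 := by
      have : w j ≤ ∑ i, w i := single_le_sum (fun _ _ => Nat.zero_le _) (mem_univ j)
      omega
    refine ⟨fun j => ⟨w j, hw j⟩, ?_, ?_⟩
    · simp only [mem_filter, mem_univ, true_and]
      omega
    · dsimp only
      congr 1
      omega

theorem sury_identity_general (K : Type*) [Field K] (k n : ℕ) :
    ∑ r ∈ Finset.Nat.antidiagonalTuple k n, ∏ i, (X i : MvPolynomial (Fin k) K) ^ r i =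
    ∑ v ∈ Finset.univ.filter
        (fun v : Fin (k - 1) → Fin (n + 1) =>
          ∑ j : Fin (k - 1), ((j : ℕ) + 2) * (v j : ℕ) ≤ n),
      (((n - ∑ j : Fin (k - 1), ((j : ℕ) + 1) * (v j : ℕ)).factorial /
          ((∏ j : Fin (k - 1), ((v j : ℕ)).factorial) *
            (n - ∑ j : Fin (k - 1), ((j : ℕ) + 2) * (v j : ℕ)).factorial) : ℕ) :
          MvPolynomial (Fin k) K) *
        esymm (Fin k) K 1 ^ (n - ∑ j : Fin (k - 1), ((j : ℕ) + 2) * (v j : ℕ)) *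
        ∏ j : Fin (k - 1),
          ((-1) ^ ((j : ℕ) + 1) * esymm (Fin k) K ((j : ℕ) + 2)) ^ (v j : ℕ) := by
  rcases k with _ | k
  · cases n <;> simp [esymm_one]
  rw [Nat.add_sub_cancel, MvPolynomial.sum_antidiagonalTuple_prod_X_pow_eq_sum_multinomial,
    sum_range_sum_piAntidiag_weighted_eq_sum_cons]
  refine sum_congr rfl fun v hv => ?_
  have hsplit := Fin.sum_add_two_mul fun j => (v j : ℕ)
  have hm : n - ∑ j : Fin k, ((j : ℕ) + 1) * (v j : ℕ) =
      n - ∑ j : Fin k, ((j : ℕ) + 2) * (v j : ℕ) + ∑ j, (v j : ℕ) := by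
    simp only [mem_filter, mem_univ, true_and] at hv
    omega
  rw [Nat.multinomial_univ_fin_cons, Fin.prod_univ_succ, hm]
  simp only [Fin.cons_zero, Fin.cons_succ, Fin.val_zero, Fin.val_succ, pow_zero, one_mul, zero_add]
  ring_nf

/-- **Sury's identity (Theorem 1 of Sury).**
In `K[x_1, …, x_k]` with `K` a field of characteristic `0`, the sum of all monomials
`x_1^{r_1} ⋯ x_k^{r_k}` of total degree `n` equals the sum over all tuples of
non-negative integers `(i_2, …, i_k)` with `2i_2 + 3i_3 + ⋯ + k·i_k ≤ n` of
`c(i_2, …, i_k, n) · e_1^{n - 2i_2 - ⋯ - k·i_k} · (-e_2)^{i_2} · e_3^{i_3} ⋯ ((-1)^{k-1} e_k)^{i_k}`,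
where `c(i_2, …, i_k, n) = (n - i_2 - 2i_3 - ⋯ - (k-1)i_k)! / (i_2! ⋯ i_k! · (n - 2i_2 - ⋯ - k·i_k)!)`.
Here the tuple `(i_2, …, i_k)` is encoded as `v : Fin (k-1) → Fin (n+1)`
(with `i_{j+2} = v j`; any `i_t` satisfying the constraint is at most `n`). -/
theorem sury_identity (K : Type*) [Field K] [CharZero K] (k n : ℕ) (hk : 1 ≤ k) (hn : 1 ≤ n) :
    ∑ r ∈ Finset.Nat.antidiagonalTuple k n, ∏ i, (X i : MvPolynomial (Fin k) K) ^ r i =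
    ∑ v ∈ Finset.univ.filter
        (fun v : Fin (k - 1) → Fin (n + 1) =>
          ∑ j : Fin (k - 1), ((j : ℕ) + 2) * (v j : ℕ) ≤ n),
      (((n - ∑ j : Fin (k - 1), ((j : ℕ) + 1) * (v j : ℕ)).factorial /
          ((∏ j : Fin (k - 1), ((v j : ℕ)).factorial) *
            (n - ∑ j : Fin (k - 1), ((j : ℕ) + 2) * (v j : ℕ)).factorial) : ℕ) :
          MvPolynomial (Fin k) K) *
        esymm (Fin k) K 1 ^ (n - ∑ j : Fin (k - 1), ((j : ℕ) + 2) * (v j : ℕ)) *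
        ∏ j : Fin (k - 1),
          ((-1) ^ ((j : ℕ) + 1) * esymm (Fin k) K ((j : ℕ) + 2)) ^ (v j : ℕ) :=
  sury_identity_general K k n
end

section
/- Let n be a positive integer and x, y, z be indeterminates (elements of a field of characteristic 0, pairwise distinct). Then the sum over all pairs of non-negative integers (i, j) with 2i + 3j ≤ n of (-1)^i · C(i+j, j) · C(n-i-2j, i+j) · (x+y+z)^{n-2i-3j} · (xy+yz+zx)^i · (xyz)^j equals (xy(x^{n+1} - y^{n+1}) - xz(x^{n+1} - z^{n+1}) + yz(y^{n+1} - z^{n+1})) / ((x-y)(x-z)(y-z)). -/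
/-!
The left-hand side is the sum over compositions of `n` into parts `1, 2, 3` weighted by
`e₁ = x + y + z`, `-e₂ = -(xy + yz + zx)` and `e₃ = xyz`, so splitting off the first part
gives `s (n + 3) = e₁ s (n + 2) - e₂ s (n + 1) + e₃ s n`. The numerator on the right is
`x ^ (n + 2) (y - z) + y ^ (n + 2) (z - x) + z ^ (n + 2) (x - y)`, which satisfies the same
recurrence because `x, y, z` are the roots of `t ^ 3 - e₁ t ^ 2 + e₂ t - e₃`. Hence
`s n * (x - y) (x - z) (y - z)` equals the numerator once both agree for `n = 0, 1, 2`.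
-/

open Finset

theorem Nat.choose_succ_eq_sub_one_add {m k : ℕ} (h : 0 < m ∨ 0 < k) :
    m.choose (k + 1) = (m - 1).choose k + (m - 1).choose (k + 1) := by
  rcases m with _ | m
  · simp [Nat.choose_eq_zero_of_lt (show 0 < k by omega)]
  · exact Nat.choose_succ_succ' m k

namespace Sury

/-- The number of compositions of `n` into `i` parts `2`, `j` parts `3` and the rest `1`: choose
which of the `n - i - 2 * j` parts are not `1`, then which of those are `3`. -/
def coeff (n i j : ℕ) : ℕ := (i + j).choose j * (n - i - 2 * j).choose (i + j)

theorem coeff_eq_zero_of_lt {n i j : ℕ} (h : n < 2 * i + 3 * j) : coeff n i j = 0 := by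
  rw [coeff, Nat.choose_eq_zero_of_lt (by omega : n - i - 2 * j < i + j), mul_zero]

theorem coeff_add_three (n i j : ℕ) :
    coeff (n + 3) i j = coeff (n + 2) i j + (if i = 0 then 0 else coeff (n + 1) (i - 1) j) +
      (if j = 0 then 0 else coeff n i (j - 1)) := by
  rcases i with _ | i <;> rcases j with _ | j <;>
    simp only [coeff, if_pos, if_neg (Nat.succ_ne_zero _), add_tsub_cancel_right, zero_add,
      add_zero, Nat.choose_zero_right, Nat.choose_self, one_mul, mul_one, tsub_zero, mul_zero]
  · rw [Nat.choose_succ_eq_sub_one_add (by omega), add_comm,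
      show n + 3 - 2 * (j + 1) - 1 = n + 2 - 2 * (j + 1) by omega,
      show n - 2 * j = n + 2 - 2 * (j + 1) by omega]
  · rw [Nat.choose_succ_eq_sub_one_add (by omega), add_comm,
      show n + 3 - (i + 1) - 1 = n + 2 - (i + 1) by omega,
      show n + 1 - i = n + 2 - (i + 1) by omega]
  · rw [show i + 1 + (j + 1) = i + j + 1 + 1 by omega, show i + (j + 1) = i + j + 1 by omega,
      show i + 1 + j = i + j + 1 by omega, Nat.choose_succ_succ' (i + j + 1) j,
      Nat.choose_succ_eq_sub_one_add (m := n + 3 - (i + 1) - 2 * (j + 1)) (by omega),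
      show n + 3 - (i + 1) - 2 * (j + 1) - 1 = n + 2 - (i + 1) - 2 * (j + 1) by omega,
      show n + 1 - i - 2 * (j + 1) = n + 2 - (i + 1) - 2 * (j + 1) by omega,
      show n - (i + 1) - 2 * j = n + 2 - (i + 1) - 2 * (j + 1) by omega]
    ring

section Semiring

variable {R : Type*} [CommSemiring R] (a b c : R)

def mono (n i j : ℕ) : R := a ^ (n - 2 * i - 3 * j) * b ^ i * c ^ j

def compositionSum (n : ℕ) : R :=
  ∑ i ∈ range (n + 1), ∑ j ∈ range (n + 1), coeff n i j * mono a b c n i j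

theorem sum_range_eq_compositionSum (n N₁ N₂ : ℕ) (h₁ : n < N₁) (h₂ : n < N₂) :
    ∑ i ∈ range N₁, ∑ j ∈ range N₂, (coeff n i j : R) * mono a b c n i j =
      compositionSum a b c n := by
  have hzero : ∀ i j, n < i ∨ n < j → (coeff n i j : R) * mono a b c n i j = 0 := by
    intro i j h
    rw [coeff_eq_zero_of_lt (by omega), Nat.cast_zero, zero_mul]
  rw [compositionSum,
    eventually_constant_sum (fun i hi => sum_eq_zero fun j _ => hzero i j (by omega)) h₁]
  exact sum_congr rfl fun i _ =>
    eventually_constant_sum (fun j hj => hzero i j (by omega)) h₂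

theorem mul_coeff_mul_mono (n i j : ℕ) :
    a * (coeff n i j * mono a b c n i j) = coeff n i j * mono a b c (n + 1) i j := by
  by_cases h : 2 * i + 3 * j ≤ n
  · rw [mono, mono, show n + 1 - 2 * i - 3 * j = n - 2 * i - 3 * j + 1 by omega]
    ring
  · rw [coeff_eq_zero_of_lt (by omega)]
    simp

theorem mul_mono_eq_mono_succ_left (n i j : ℕ) :
    b * mono a b c n i j = mono a b c (n + 2) (i + 1) j := by
  rw [mono, mono, show n + 2 - 2 * (i + 1) - 3 * j = n - 2 * i - 3 * j by omega]
  ring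

theorem mul_mono_eq_mono_succ_right (n i j : ℕ) :
    c * mono a b c n i j = mono a b c (n + 3) i (j + 1) := by
  rw [mono, mono, show n + 3 - 2 * i - 3 * (j + 1) = n - 2 * i - 3 * j by omega]
  ring

theorem compositionSum_add_three (n : ℕ) :
    compositionSum a b c (n + 3) =
      a * compositionSum a b c (n + 2) + b * compositionSum a b c (n + 1) +
        c * compositionSum a b c n := by
  have ha : a * compositionSum a b c (n + 2) = ∑ i ∈ range (n + 4), ∑ j ∈ range (n + 4),
      (coeff (n + 2) i j : R) * mono a b c (n + 3) i j := by
    simp only [← sum_range_eq_compositionSum a b c (n + 2) (n + 4) (n + 4) (by omega) (by omega),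
      mul_sum, mul_coeff_mul_mono]
  have hb : b * compositionSum a b c (n + 1) = ∑ i ∈ range (n + 4), ∑ j ∈ range (n + 4),
      (if i = 0 then 0 else (coeff (n + 1) (i - 1) j : R)) * mono a b c (n + 3) i j := by
    rw [← sum_range_eq_compositionSum a b c (n + 1) (n + 3) (n + 4) (by omega) (by omega),
      mul_sum, sum_range_succ' _ (n + 3)]
    simp only [if_pos, if_neg (Nat.succ_ne_zero _), add_tsub_cancel_right, zero_mul,
      sum_const_zero, add_zero, mul_sum, mul_left_comm b, mul_mono_eq_mono_succ_left]
  have hc : c * compositionSum a b c n = ∑ i ∈ range (n + 4), ∑ j ∈ range (n + 4),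
      (if j = 0 then 0 else (coeff n i (j - 1) : R)) * mono a b c (n + 3) i j := by
    rw [← sum_range_eq_compositionSum a b c n (n + 4) (n + 3) (by omega) (by omega), mul_sum]
    refine sum_congr rfl fun i _ => ?_
    rw [sum_range_succ' _ (n + 3)]
    simp only [if_pos, if_neg (Nat.succ_ne_zero _), add_tsub_cancel_right, zero_mul, add_zero,
      mul_sum, mul_left_comm c, mul_mono_eq_mono_succ_right]
  rw [ha, hb, hc, ← sum_add_distrib, ← sum_add_distrib, compositionSum]
  refine sum_congr rfl fun i _ => ?_
  rw [← sum_add_distrib, ← sum_add_distrib]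
  refine sum_congr rfl fun j _ => ?_
  rw [coeff_add_three]
  push_cast
  ring

theorem compositionSum_zero : compositionSum a b c 0 = 1 := by
  simp [compositionSum, coeff, mono]

theorem compositionSum_one : compositionSum a b c 1 = a := by
  simp [compositionSum, coeff, mono, sum_range_succ]

theorem compositionSum_two : compositionSum a b c 2 = a ^ 2 + b := by
  simp [compositionSum, coeff, mono, sum_range_succ, sq]

end Semiring

section Ring

variable {R : Type*} [CommRing R]

theorem compositionSum_mul_vandermonde (x y z : R) : ∀ n : ℕ,
    compositionSum (x + y + z) (-(x * y + y * z + z * x)) (x * y * z) n *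
        ((x - y) * (x - z) * (y - z)) =
      x * y * (x ^ (n + 1) - y ^ (n + 1)) - x * z * (x ^ (n + 1) - z ^ (n + 1)) +
        y * z * (y ^ (n + 1) - z ^ (n + 1))
  | 0 => by rw [compositionSum_zero]; ring
  | 1 => by rw [compositionSum_one]; ring
  | 2 => by rw [compositionSum_two]; ring
  | n + 3 => by
    rw [compositionSum_add_three]
    linear_combination (x + y + z) * compositionSum_mul_vandermonde x y z (n + 2) -
      (x * y + y * z + z * x) * compositionSum_mul_vandermonde x y z (n + 1) +
      x * y * z * compositionSum_mul_vandermonde x y z n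

theorem compositionSum_neg_eq_sum_filter (a b c : R) (n : ℕ) :
    compositionSum a (-b) c n = ∑ p ∈ (range (n + 1) ×ˢ range (n + 1)).filter
        (fun p => 2 * p.1 + 3 * p.2 ≤ n),
      (-1 : R) ^ p.1 * ((p.1 + p.2).choose p.2 : R) * ((n - p.1 - 2 * p.2).choose (p.1 + p.2) : R) *
        a ^ (n - 2 * p.1 - 3 * p.2) * b ^ p.1 * c ^ p.2 := by
  rw [sum_filter_of_ne fun p _ hp => ?_, sum_product, compositionSum]
  · refine sum_congr rfl fun i _ => sum_congr rfl fun j _ => ?_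
    rw [coeff, mono, neg_pow]
    push_cast
    ring
  · by_contra hlt
    rw [Nat.choose_eq_zero_of_lt (show n - p.1 - 2 * p.2 < p.1 + p.2 by omega)] at hp
    simp at hp

end Ring

end Sury

theorem sury_three_variable_identity_general (K : Type*) [Field K] (n : ℕ)
    (x y z : K) (hxy : x ≠ y) (hxz : x ≠ z) (hyz : y ≠ z) :
    ∑ p ∈ (Finset.range (n + 1) ×ˢ Finset.range (n + 1)).filter
        (fun p => 2 * p.1 + 3 * p.2 ≤ n),
      (-1 : K) ^ p.1 * ((p.1 + p.2).choose p.2 : K) *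
        ((n - p.1 - 2 * p.2).choose (p.1 + p.2) : K) *
        (x + y + z) ^ (n - 2 * p.1 - 3 * p.2) *
        (x * y + y * z + z * x) ^ p.1 * (x * y * z) ^ p.2 =
    (x * y * (x ^ (n + 1) - y ^ (n + 1)) - x * z * (x ^ (n + 1) - z ^ (n + 1)) +
        y * z * (y ^ (n + 1) - z ^ (n + 1))) / ((x - y) * (x - z) * (y - z)) := by
  have hD : (x - y) * (x - z) * (y - z) ≠ 0 := by
    simp [sub_ne_zero, hxy, hxz, hyz]
  rw [← Sury.compositionSum_neg_eq_sum_filter, eq_div_iff hD,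
    Sury.compositionSum_mul_vandermonde]

/-- **Sury's identity in three variables (Theorem 3 of Sury).**
For a positive integer `n` and pairwise distinct `x, y, z` in a field of characteristic `0`,
`∑_{2i+3j ≤ n} (-1)^i C(i+j, j) C(n-i-2j, i+j) (x+y+z)^{n-2i-3j} (xy+yz+zx)^i (xyz)^j`
equals
`(xy(x^{n+1}-y^{n+1}) - xz(x^{n+1}-z^{n+1}) + yz(y^{n+1}-z^{n+1})) / ((x-y)(x-z)(y-z))`. -/
theorem sury_three_variable_identity (K : Type*) [Field K] [CharZero K] (n : ℕ) (hn : 1 ≤ n)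
    (x y z : K) (hxy : x ≠ y) (hxz : x ≠ z) (hyz : y ≠ z) :
    ∑ p ∈ (Finset.range (n + 1) ×ˢ Finset.range (n + 1)).filter
        (fun p => 2 * p.1 + 3 * p.2 ≤ n),
      (-1 : K) ^ p.1 * ((p.1 + p.2).choose p.2 : K) *
        ((n - p.1 - 2 * p.2).choose (p.1 + p.2) : K) *
        (x + y + z) ^ (n - 2 * p.1 - 3 * p.2) *
        (x * y + y * z + z * x) ^ p.1 * (x * y * z) ^ p.2 =
    (x * y * (x ^ (n + 1) - y ^ (n + 1)) - x * z * (x ^ (n + 1) - z ^ (n + 1)) +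
        y * z * (y ^ (n + 1) - z ^ (n + 1))) / ((x - y) * (x - z) * (y - z)) :=
  sury_three_variable_identity_general K n x y z hxy hxz hyz
end

section
/- Let r ≥ 1 and let c_1, c_2, ..., c_r be real numbers. Define the sequence (u_n) by the r-th order linear recurrence u_n = c_1 u_{n-1} + c_2 u_{n-2} + ... + c_r u_{n-r} for n ≥ 1, with initial conditions u_0 = 1 and u_j = 0 for j < 0 (set c_t = 0 for t > r). Then for every positive integer n, u_n = det(C), where C is the n×n matrix with entries C_{i,j} = (-1)^{j-i} c_{j-i+1} for j ≥ i (so the diagonal is c_1, the first superdiagonal is -c_2, the second superdiagonal is c_3, ..., up to the (r-1)-st superdiagonal (-1)^{r+1} c_r, and 0 beyond), C_{i+1,i} = 1 on the first subdiagonal, and all other entries 0. -/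
/-!
Write `H n` for the `n × n` matrix of the statement. Expanding `det (H (n + 1))` along its first
row, the minor of the entry `(-1) ^ j * c (j + 1)` is block upper triangular, with a
unitriangular `j × j` block followed by `H (n - j)` (the entries depend only on `j - i`); its
cofactor sign `(-1) ^ j` cancels the sign of the entry. Hence
`det (H (n + 1)) = ∑_{j ≤ n} c (j + 1) det (H (n - j))`, which is the given recurrence once the
vanishing of `c t` for `t > r` and of `u j` for `j < 0` puts both sums over the same range.
-/

open Finset

lemma sum_range_eq_sum_range_of_eq_zero {M : Type*} [AddCommMonoid M] {f : ℕ → M} {a b : ℕ}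
    (ha : ∀ j, a ≤ j → f j = 0) (hb : ∀ j, b ≤ j → f j = 0) :
    ∑ j ∈ range a, f j = ∑ j ∈ range b, f j := by
  wlog hab : a ≤ b generalizing a b
  · exact (this hb ha (by omega)).symm
  exact sum_subset (range_subset_range.mpr hab) fun j _ hj => ha j (by simpa using hj)

namespace ToeplitzHessenberg

variable {R : Type*} [CommRing R]

def entry (c : ℕ → R) (i j : ℕ) : R :=
  if i ≤ j then (-1) ^ (j - i) * c (j - i + 1) else if i = j + 1 then 1 else 0

def matrix (c : ℕ → R) (n : ℕ) : Matrix (Fin n) (Fin n) R :=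
  Matrix.of fun i j => entry c i j

variable (c : ℕ → R)

@[simp]
lemma matrix_apply {n : ℕ} (i j : Fin n) : matrix c n i j = entry c i j := rfl

@[simp]
lemma entry_succ_succ (i j : ℕ) : entry c (i + 1) (j + 1) = entry c i j := by
  simp [entry]

lemma entry_zero_left (j : ℕ) : entry c 0 j = (-1) ^ j * c (j + 1) := by
  simp [entry]

lemma entry_succ_zero (i : ℕ) : entry c (i + 1) 0 = if i = 0 then 1 else 0 := by
  simp [entry]

lemma submatrix_succ_succ (n : ℕ) :
    (matrix c (n + 1)).submatrix Fin.succ Fin.succ = matrix c n := by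
  ext i j
  simp

lemma det_submatrix_succ_succAbove (n : ℕ) (j : Fin (n + 1)) :
    ((matrix c (n + 1)).submatrix Fin.succ j.succAbove).det = (matrix c (n - j)).det := by
  induction n with
  | zero => rw [Nat.zero_sub]; simp [Matrix.det_fin_zero]
  | succ m ih =>
    cases j using Fin.cases with
    | zero => rw [Fin.succAbove_zero, submatrix_succ_succ, Fin.val_zero, Nat.sub_zero]
    | succ j =>
      set N := (matrix c (m + 2)).submatrix Fin.succ j.succ.succAbove
      have hcorner : N 0 0 = 1 := by simp [N, entry_succ_zero]
      have hcol : ∀ i : Fin m, N i.succ 0 = 0 := fun i => by simp [N, entry_succ_zero]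
      have hminor :
          N.submatrix Fin.succ Fin.succ = (matrix c (m + 1)).submatrix Fin.succ j.succAbove := by
        ext i k
        simp [N]
      rw [Matrix.det_succ_column_zero, Fin.sum_univ_succ, Fin.val_succ, Nat.add_sub_add_right]
      simp [hcol, hcorner, Fin.succAbove_zero, hminor, ih]

lemma det_matrix_succ (n : ℕ) :
    (matrix c (n + 1)).det = ∑ j ∈ range (n + 1), c (j + 1) * (matrix c (n - j)).det := by
  rw [Matrix.det_succ_row_zero,
    ← Fin.sum_univ_eq_sum_range fun j => c (j + 1) * (matrix c (n - j)).det]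
  refine Fintype.sum_congr _ _ fun j => ?_
  have hsign : ((-1 : R) ^ (j : ℕ)) * (-1) ^ (j : ℕ) = 1 := by
    rw [← mul_pow, neg_one_mul, neg_neg, one_pow]
  rw [det_submatrix_succ_succAbove]
  simp only [matrix_apply, Fin.val_zero, entry_zero_left]
  linear_combination (c (j + 1) * (matrix c (n - j)).det) * hsign

theorem eq_det_matrix_of_recurrence (v : ℕ → R) (h0 : v 0 = 1)
    (hrec : ∀ n, v (n + 1) = ∑ j ∈ range (n + 1), c (j + 1) * v (n - j)) (n : ℕ) :
    v n = (matrix c n).det := by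
  induction n using Nat.strong_induction_on with
  | _ n ih =>
    cases n with
    | zero => simp [h0]
    | succ n =>
      rw [hrec, det_matrix_succ]
      exact sum_congr rfl fun j _ => by rw [ih (n - j) (by omega)]

end ToeplitzHessenberg

lemma sum_Icc_mul_sub_eq_sum_range {R : Type*} [CommRing R] (r n : ℕ) (c : ℕ → R)
    (hc : ∀ t, r < t → c t = 0) (u : ℤ → R) (huneg : ∀ j : ℤ, j < 0 → u j = 0) :
    ∑ t ∈ Icc 1 r, c t * u ((n + 1 : ℕ) - t) =
      ∑ j ∈ range (n + 1), c (j + 1) * u (n - j : ℕ) := by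
  have hshift := sum_Ico_add' (fun t => c t * u ((n + 1 : ℕ) - t)) 0 r 1
  rw [zero_add, Ico_add_one_right_eq_Icc] at hshift
  rw [← hshift, ← range_eq_Ico]
  calc ∑ j ∈ range r, c (j + 1) * u ((n + 1 : ℕ) - (j + 1 : ℕ))
      = ∑ j ∈ range (n + 1), c (j + 1) * u ((n + 1 : ℕ) - (j + 1 : ℕ)) := by
        refine sum_range_eq_sum_range_of_eq_zero (fun j hj => ?_) (fun j hj => ?_)
        · rw [hc _ (by omega), zero_mul]
        · rw [huneg _ (by omega), mul_zero]
    _ = ∑ j ∈ range (n + 1), c (j + 1) * u (n - j : ℕ) := by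
        refine sum_congr rfl fun j hj => ?_
        rw [mem_range] at hj
        push_cast [Nat.cast_sub (Nat.le_of_lt_succ hj)]
        congr 2
        ring

theorem linear_recurrence_eq_det_general (r : ℕ) (c : ℕ → ℝ) (hc : ∀ t, r < t → c t = 0)
    (u : ℤ → ℝ) (hu0 : u 0 = 1) (huneg : ∀ j : ℤ, j < 0 → u j = 0)
    (hrec : ∀ m : ℤ, 1 ≤ m → u m = ∑ t ∈ Finset.Icc 1 r, c t * u (m - (t : ℤ)))
    (n : ℕ) :
    u n = Matrix.det (fun i j : Fin n =>
      if (i : ℕ) ≤ (j : ℕ) then (-1 : ℝ) ^ ((j : ℕ) - (i : ℕ)) * c ((j : ℕ) - (i : ℕ) + 1)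
      else if (i : ℕ) = (j : ℕ) + 1 then 1 else 0) :=
  ToeplitzHessenberg.eq_det_matrix_of_recurrence c (fun m : ℕ => u m) hu0
    (fun m => by rw [hrec _ (by omega), sum_Icc_mul_sub_eq_sum_range r m c hc u huneg]) n

/-- **Determinantal interpretation of general linear recurrences.**
Let `c_1, …, c_r` be real numbers (with `c_t = 0` for `t > r`), and let `u` satisfy
`u_0 = 1`, `u_j = 0` for `j < 0`, and `u_n = c_1 u_{n-1} + ⋯ + c_r u_{n-r}` for `n ≥ 1`.
Then for every positive integer `n`, `u_n` equals the determinant of the `n × n`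
Hessenberg matrix with `(i,j)` entry `(-1)^{j-i} c_{j-i+1}` for `j ≥ i`,
entry `1` on the first subdiagonal, and `0` elsewhere. -/
theorem linear_recurrence_eq_det (r : ℕ) (hr : 1 ≤ r) (c : ℕ → ℝ) (hc : ∀ t, r < t → c t = 0)
    (u : ℤ → ℝ) (hu0 : u 0 = 1) (huneg : ∀ j : ℤ, j < 0 → u j = 0)
    (hrec : ∀ m : ℤ, 1 ≤ m → u m = ∑ t ∈ Finset.Icc 1 r, c t * u (m - (t : ℤ)))
    (n : ℕ) (hn : 1 ≤ n) :
    u n = Matrix.det (fun i j : Fin n =>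
      if (i : ℕ) ≤ (j : ℕ) then (-1 : ℝ) ^ ((j : ℕ) - (i : ℕ)) * c ((j : ℕ) - (i : ℕ) + 1)
      else if (i : ℕ) = (j : ℕ) + 1 then 1 else 0) :=
  linear_recurrence_eq_det_general r c hc u hu0 huneg hrec n
end

section
/- Let r ≥ 1 and let (F_n) be the r-acci numbers, defined by F_n = F_{n-1} + F_{n-2} + ... + F_{n-r} for n ≥ 1, with F_0 = 1 and F_i = 0 for i < 0. Then for every positive integer n, F_n = det(G), where G is the n×n matrix with entries G_{i,j} = (-1)^{j-i} for 0 ≤ j-i ≤ r-1 (so the diagonal is all 1s, the first superdiagonal all -1s, the second superdiagonal all 1s, alternating up to the (r-1)-st superdiagonal), G_{i+1,i} = 1 on the first subdiagonal, and all other entries 0. -/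
/-!
The matrix is lower Hessenberg with ones on the subdiagonal. Expanding the determinant `D_{n+1}`
of the leading `(n+1) × (n+1)` block along its last column, the minor obtained by deleting row
`i` is block triangular, with the leading `i × i` block in one corner and an upper unitriangular
block in the other, so it equals `D_i`. Since the entry `(-1)^{n-i}` cancels the cofactor sign,
`D_{n+1} = D_n + D_{n-1} + ⋯ + D_{n-r+1}` (terms with negative index omitted), which is the
`r`-acci recurrence with `D_0 = 1`.
-/

open Finset Matrix

section Hessenberg

variable {R : Type*} [CommRing R]

def leadingMinor (a : ℕ → ℕ → R) (n : ℕ) : R :=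
  det (of fun i j : Fin n => a i j)

lemma Fin.val_succAbove_eq_ite {n : ℕ} (i : Fin (n + 1)) (p : Fin n) :
    (i.succAbove p : ℕ) = if (p : ℕ) < i then (p : ℕ) else p + 1 := by
  unfold Fin.succAbove
  split_ifs <;> simp_all [Fin.lt_def]

variable {a : ℕ → ℕ → R} (hsubdiag : ∀ j, a (j + 1) j = 1)
  (hbelow : ∀ i j, j + 1 < i → a i j = 0)
include hsubdiag hbelow

-- The last row of the matrix is the unit vector at the last column, so expanding along it
-- removes the last row and column.
lemma det_deleteRow_eq_leadingMinor {i n : ℕ} (hi : i ≤ n) :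
    det (of fun p q : Fin n => a (if (p : ℕ) < i then p else p + 1) q) = leadingMinor a i := by
  induction n, hi using Nat.le_induction with
  | base => simp [leadingMinor]
  | succ n hin ih =>
    have hlast : ¬ n < i := by omega
    rw [det_succ_row _ (Fin.last n), sum_eq_single (Fin.last n)]
    · simp only [of_apply, Fin.val_last, hlast, if_false, hsubdiag, mul_one, ← two_mul,
        pow_mul, neg_one_sq, one_pow, one_mul]
      convert ih using 2
      ext p q
      simp [Fin.succAbove_last]
    · intro q _ hq
      have hqn : (q : ℕ) + 1 < n + 1 := by
        have := Fin.val_lt_last hq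
        omega
      simp [hlast, hbelow _ _ hqn]
    · simp

lemma leadingMinor_succ (n : ℕ) :
    leadingMinor a (n + 1) =
      ∑ i ∈ range (n + 1), (-1) ^ (n - i) * a i n * leadingMinor a i := by
  rw [leadingMinor, det_succ_column _ (Fin.last n), ← Fin.sum_univ_eq_sum_range]
  refine sum_congr rfl fun i _ => ?_
  have hin : (i : ℕ) ≤ n := Fin.is_le i
  have hsign : (-1 : R) ^ ((i : ℕ) + n) = (-1) ^ (n - i) := by
    rw [show (i : ℕ) + n = n - i + 2 * i by omega, pow_add, pow_mul, neg_one_sq, one_pow, mul_one]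
  rw [Fin.val_last, hsign, ← det_deleteRow_eq_leadingMinor hsubdiag hbelow hin]
  congr 2
  ext p q
  simp [Fin.succAbove_last, Fin.val_succAbove_eq_ite]

end Hessenberg

def racciEntry (R : Type*) [Ring R] (r i j : ℕ) : R :=
  if i ≤ j ∧ j - i < r then (-1) ^ (j - i) else if i = j + 1 then 1 else 0

lemma leadingMinor_racciEntry_succ {R : Type*} [CommRing R] (r n : ℕ) :
    leadingMinor (racciEntry R r) (n + 1) =
      ∑ j ∈ range r, if j ≤ n then leadingMinor (racciEntry R r) (n - j) else 0 := by
  have hbelow : ∀ i j, j + 1 < i → racciEntry R r i j = 0 := fun i j h => by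
    rw [racciEntry, if_neg (by omega), if_neg (by omega)]
  have hterm : ∀ i ∈ range (n + 1),
      (-1) ^ (n - i) * racciEntry R r i n * leadingMinor (racciEntry R r) i =
        if n - i < r then leadingMinor (racciEntry R r) i else 0 := by
    intro i hi
    have hin : i ≤ n := Nat.lt_succ_iff.mp (mem_range.mp hi)
    by_cases h : n - i < r
    · simp [racciEntry, hin, h, ← pow_add, ← two_mul, pow_mul]
    · simp [racciEntry, hin, h, show i ≠ n + 1 by omega]
  rw [leadingMinor_succ (by simp [racciEntry]) hbelow, sum_congr rfl hterm, ← sum_filter,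
    ← sum_filter]
  refine sum_nbij' (n - ·) (n - ·) ?_ ?_ ?_ ?_ ?_ <;> intro i hi <;> simp at hi ⊢
  all_goals first | omega | (congr 1; omega)

lemma sum_Icc_sub_eq_sum_range {M : Type*} [AddCommMonoid M] (F : ℤ → M)
    (hFneg : ∀ i : ℤ, i < 0 → F i = 0) (r n : ℕ) :
    ∑ t ∈ Icc 1 r, F ((n + 1 : ℕ) - t) =
      ∑ j ∈ range r, if j ≤ n then F (n - j : ℕ) else 0 := by
  refine sum_nbij' (· - 1) (· + 1) ?_ ?_ ?_ ?_ ?_ <;> intro t ht <;> simp at ht ⊢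
  all_goals try omega
  split_ifs with h
  · congr 1; omega
  · exact hFneg _ (by omega)

lemma eq_leadingMinor_racciEntry {R : Type*} [CommRing R] (r : ℕ) (F : ℤ → R) (hF0 : F 0 = 1)
    (hFneg : ∀ i : ℤ, i < 0 → F i = 0)
    (hrec : ∀ m : ℤ, 1 ≤ m → F m = ∑ t ∈ Icc 1 r, F (m - t)) (n : ℕ) :
    F n = leadingMinor (racciEntry R r) n := by
  induction n using Nat.strong_induction_on with
  | _ n ih =>
    rcases n with _ | n
    · simpa [leadingMinor] using hF0
    · rw [hrec _ (by omega), sum_Icc_sub_eq_sum_range F hFneg, leadingMinor_racciEntry_succ]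
      exact sum_congr rfl fun j _ => by split_ifs <;> simp [ih (n - j) (by omega)]

theorem racci_eq_det_general (r : ℕ) (F : ℤ → ℤ) (hF0 : F 0 = 1)
    (hFneg : ∀ i : ℤ, i < 0 → F i = 0)
    (hrec : ∀ m : ℤ, 1 ≤ m → F m = ∑ t ∈ Finset.Icc 1 r, F (m - (t : ℤ)))
    (n : ℕ) :
    F n = Matrix.det (fun i j : Fin n =>
      if (i : ℕ) ≤ (j : ℕ) ∧ (j : ℕ) - (i : ℕ) < r then (-1 : ℤ) ^ ((j : ℕ) - (i : ℕ))
      else if (i : ℕ) = (j : ℕ) + 1 then 1 else 0) :=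
  eq_leadingMinor_racciEntry r F hF0 hFneg hrec n

/-- **Determinantal formula for the `r`-acci numbers.**
Let `F` satisfy `F_0 = 1`, `F_i = 0` for `i < 0`, and
`F_n = F_{n-1} + F_{n-2} + ⋯ + F_{n-r}` for `n ≥ 1`. Then for every positive integer `n`,
`F_n` equals the determinant of the `n × n` Hessenberg matrix whose `(i,j)` entry is
`(-1)^{j-i}` when `0 ≤ j - i ≤ r - 1`, is `1` on the first subdiagonal, and is `0`
elsewhere. -/
theorem racci_eq_det (r : ℕ) (hr : 1 ≤ r) (F : ℤ → ℤ) (hF0 : F 0 = 1)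
    (hFneg : ∀ i : ℤ, i < 0 → F i = 0)
    (hrec : ∀ m : ℤ, 1 ≤ m → F m = ∑ t ∈ Finset.Icc 1 r, F (m - (t : ℤ)))
    (n : ℕ) (hn : 1 ≤ n) :
    F n = Matrix.det (fun i j : Fin n =>
      if (i : ℕ) ≤ (j : ℕ) ∧ (j : ℕ) - (i : ℕ) < r then (-1 : ℤ) ^ ((j : ℕ) - (i : ℕ))
      else if (i : ℕ) = (j : ℕ) + 1 then 1 else 0) :=
  racci_eq_det_general r F hF0 hFneg hrec n
end

section
/- Let r ≥ 1 and let F_n be the n-th term of the r-acci numbers. Then F_n equals the sum, over all tuples of non-negative integers (i_2, ..., i_r) with 2i_2 + 3i_3 + ... + r·i_r ≤ n, of the multinomial coefficient (n - i_2 - 2i_3 - ... - (r-1)i_r)! / (i_2! ··· i_r! · (n - 2i_2 - 3i_3 - ... - r·i_r)!). -/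
/-!
Let `T r n` be the number of compositions of `n` with parts at most `r`. A composition is an
ordering of its multiset of parts, so grouping by the multiplicities `i_1, …, i_r` of the parts
`1, …, r` gives `T r n = ∑ (i_1 + ⋯ + i_r)! / (i_1! ⋯ i_r!)` over `i_1 + 2 i_2 + ⋯ + r i_r = n`;
eliminating `i_1 = n - 2 i_2 - ⋯ - r i_r` turns this into the stated sum. Taking the multinomial
sum as the definition of `T`, Pascal's rule for multinomial coefficients (lower one `i_t` by one)
gives `T r n = T r (n - 1) + ⋯ + T r (n - r)` for `n ≥ 1`, which together with `T r 0 = 1`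
identifies `T r n` with `F n`.
-/

open Finset Nat Function

namespace Nat

theorem prod_factorial_mul_multinomial_update_pred {α : Type*} [DecidableEq α] {s : Finset α}
    {f : α → ℕ} {i : α} (hi : i ∈ s) (hfi : f i ≠ 0) :
    (∏ j ∈ s, (f j)!) * multinomial s (update f i (f i - 1)) = f i * (∑ j ∈ s, f j - 1)! := by
  have hprod : ∏ j ∈ s, (f j)! = f i * ∏ j ∈ s, (update f i (f i - 1) j)! := by
    rw [← mul_prod_erase s _ hi, ← mul_prod_erase s (fun j => (update f i (f i - 1) j)!) hi,
      update_self, ← mul_assoc, mul_factorial_pred hfi]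
    congr 1
    exact prod_congr rfl fun j hj => by rw [update_of_ne (ne_of_mem_erase hj)]
  have hsum : ∑ j ∈ s, update f i (f i - 1) j = ∑ j ∈ s, f j - 1 := by
    rw [sum_update_of_mem hi, ← add_sum_erase s f hi, sdiff_singleton_eq_erase]
    omega
  rw [hprod, mul_assoc, multinomial_spec, hsum]

theorem multinomial_eq_sum_update_pred {α : Type*} [DecidableEq α] {s : Finset α}
    {f : α → ℕ} (hf : ∑ i ∈ s, f i ≠ 0) :
    multinomial s f = ∑ i ∈ s with f i ≠ 0, multinomial s (update f i (f i - 1)) := by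
  refine Nat.eq_of_mul_eq_mul_left (prod_pos fun j (_ : j ∈ s) => (f j).factorial_pos) ?_
  rw [multinomial_spec, mul_sum, sum_congr rfl fun i hi =>
    prod_factorial_mul_multinomial_update_pred (mem_filter.1 hi).1 (mem_filter.1 hi).2,
    ← sum_mul, sum_filter_ne_zero, mul_factorial_pred hf]

theorem multinomial_univ_cons {r : ℕ} (a : ℕ) (v : Fin r → ℕ) :
    multinomial univ (Fin.cons a v : Fin (r + 1) → ℕ) = (a + ∑ j, v j)! / (a ! * ∏ j, (v j)!) := by
  simp [multinomial, Fin.sum_univ_succ, Fin.prod_univ_succ]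

end Nat

theorem Finset.sum_Icc_one_eq_sum_fin {M : Type*} [AddCommMonoid M] (r : ℕ) (g : ℕ → M) :
    ∑ u ∈ Icc 1 r, g u = ∑ t : Fin r, g (t + 1) := by
  rw [Fin.sum_univ_eq_sum_range (fun t => g (t + 1)), range_eq_Ico, sum_Ico_add']
  rfl

namespace Racci

def partWeight {r : ℕ} (σ : Fin r → ℕ) : ℕ := ∑ t : Fin r, (t + 1 : ℕ) * σ t

/-- `σ t` is the multiplicity of the part `t + 1` in a partition of `n` with parts at most `r`.
The bound `σ t ≤ n` only makes the set finite. -/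
def partCounts (r n : ℕ) : Finset (Fin r → ℕ) :=
  {σ ∈ Fintype.piFinset fun _ => range (n + 1) | partWeight σ = n}

/-- The number of compositions of `n` with parts at most `r`: `multinomial univ σ` counts the
orderings of the parts of the partition with multiplicities `σ`. -/
def compositionCount (r n : ℕ) : ℕ :=
  ∑ σ ∈ partCounts r n, multinomial univ σ

section
variable {r n : ℕ} {σ : Fin r → ℕ}

theorem mul_le_partWeight (σ : Fin r → ℕ) (t : Fin r) : (t + 1 : ℕ) * σ t ≤ partWeight σ :=
  single_le_sum (f := fun s : Fin r => (s + 1 : ℕ) * σ s) (fun _ _ => Nat.zero_le _) (mem_univ t)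

theorem partWeight_update_add (σ : Fin r → ℕ) (t : Fin r) (a : ℕ) :
    partWeight (update σ t a) + (t + 1 : ℕ) * σ t = partWeight σ + (t + 1 : ℕ) * a := by
  rw [partWeight, partWeight, ← add_sum_erase _ _ (mem_univ t),
    ← add_sum_erase univ (fun s : Fin r => (s + 1 : ℕ) * σ s) (mem_univ t), update_self,
    sum_congr rfl fun s hs => by rw [update_of_ne (ne_of_mem_erase hs)]]
  ring

theorem partWeight_cons (a : ℕ) (v : Fin r → ℕ) :
    partWeight (Fin.cons a v : Fin (r + 1) → ℕ) = a + ∑ j : Fin r, (j + 2 : ℕ) * v j := by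
  simp [partWeight, Fin.sum_univ_succ, add_assoc, one_add_one_eq_two]

theorem mem_partCounts : σ ∈ partCounts r n ↔ partWeight σ = n := by
  refine ⟨fun h => (mem_filter.1 h).2, fun h => mem_filter.2 ⟨Fintype.mem_piFinset.2 fun t => ?_, h⟩⟩
  have := mul_le_partWeight σ t
  rw [mem_range]
  nlinarith

theorem mul_le_of_mem_partCounts (hσ : σ ∈ partCounts r n) (t : Fin r) : (t + 1 : ℕ) * σ t ≤ n :=
  mem_partCounts.1 hσ ▸ mul_le_partWeight σ t

end

theorem partCounts_zero (r : ℕ) : partCounts r 0 = {0} := by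
  ext σ
  simp [mem_partCounts, partWeight, funext_iff]

theorem compositionCount_zero (r : ℕ) : compositionCount r 0 = 1 := by
  simp [compositionCount, partCounts_zero, multinomial]

theorem sum_partCounts_multinomial_update_pred (r m : ℕ) (t : Fin r) :
    ∑ σ ∈ partCounts r (m + (t + 1)) with σ t ≠ 0, multinomial univ (update σ t (σ t - 1)) =
      compositionCount r m := by
  refine sum_nbij' (fun σ => update σ t (σ t - 1)) (fun σ => update σ t (σ t + 1)) ?_ ?_ ?_ ?_
    fun _ _ => rfl
  · intro σ hσ
    obtain ⟨hσ, hσt⟩ := mem_filter.1 hσ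
    obtain ⟨k, hk⟩ := exists_eq_add_one_of_ne_zero hσt
    have := partWeight_update_add σ t (σ t - 1)
    rw [mem_partCounts, hk, add_tsub_cancel_right]
    rw [mem_partCounts.1 hσ, hk, add_tsub_cancel_right] at this
    linarith
  · intro σ hσ
    have := partWeight_update_add σ t (σ t + 1)
    rw [mem_partCounts.1 hσ] at this
    rw [mem_filter, mem_partCounts, update_self]
    exact ⟨by linarith, succ_ne_zero _⟩
  · intro σ hσ
    simp [Nat.sub_add_cancel (pos_of_ne_zero (mem_filter.1 hσ).2)]
  · intro σ _
    simp

theorem compositionCount_eq_sum {r n : ℕ} (hn : n ≠ 0) :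
    compositionCount r n =
      ∑ t : Fin r, if t + 1 ≤ n then compositionCount r (n - (t + 1)) else 0 := by
  have hpascal : ∀ σ ∈ partCounts r n, multinomial univ σ =
      ∑ t, if σ t ≠ 0 then multinomial univ (update σ t (σ t - 1)) else 0 := by
    intro σ hσ
    rw [← sum_filter]
    refine multinomial_eq_sum_update_pred fun hσ0 => hn ?_
    rw [← mem_partCounts.1 hσ, partWeight]
    exact sum_eq_zero fun t _ => by rw [sum_eq_zero_iff.1 hσ0 t (mem_univ t), mul_zero]
  rw [compositionCount, sum_congr rfl hpascal, sum_comm]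
  refine sum_congr rfl fun t _ => ?_
  rw [← sum_filter]
  split_ifs with ht
  · obtain ⟨m, rfl⟩ := exists_add_of_le ht
    rw [add_comm, sum_partCounts_multinomial_update_pred, add_tsub_cancel_right]
  · refine sum_eq_zero fun σ hσ => absurd ?_ ht
    obtain ⟨hσ, hσt⟩ := mem_filter.1 hσ
    exact (Nat.le_mul_of_pos_right _ (pos_of_ne_zero hσt)).trans (mul_le_of_mem_partCounts hσ t)

theorem eq_compositionCount (r : ℕ) (F : ℤ → ℤ) (hF0 : F 0 = 1)
    (hFneg : ∀ i : ℤ, i < 0 → F i = 0)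
    (hrec : ∀ m : ℤ, 1 ≤ m → F m = ∑ t ∈ Icc 1 r, F (m - (t : ℤ))) (n : ℕ) :
    F n = compositionCount r n := by
  induction n using Nat.strong_induction_on with
  | _ n ih =>
    rcases eq_or_ne n 0 with rfl | hn
    · rw [compositionCount_zero, cast_zero, hF0, cast_one]
    rw [hrec n (by omega), sum_Icc_one_eq_sum_fin, compositionCount_eq_sum hn, cast_sum]
    refine sum_congr rfl fun t _ => ?_
    split_ifs with ht
    · rw [← ih _ (by omega), cast_sub ht]
    · rw [hFneg _ (by omega), cast_zero]

theorem compositionCount_succ (r n : ℕ) :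
    compositionCount (r + 1) n = ∑ v ∈ Finset.univ.filter
        (fun v : Fin r → Fin (n + 1) => ∑ j : Fin r, ((j : ℕ) + 2) * (v j : ℕ) ≤ n),
      (n - ∑ j : Fin r, ((j : ℕ) + 1) * (v j : ℕ))! /
        ((∏ j : Fin r, (v j : ℕ)!) * (n - ∑ j : Fin r, ((j : ℕ) + 2) * (v j : ℕ))!) := by
  have hweight (σ : Fin (r + 1) → ℕ) (hσ : σ ∈ partCounts (r + 1) n) :
      σ 0 + ∑ j : Fin r, (j + 2 : ℕ) * σ j.succ = n := by
    have := mem_partCounts.1 hσ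
    rwa [← Fin.cons_self_tail σ, partWeight_cons] at this
  have hval (σ : Fin (r + 1) → ℕ) (hσ : σ ∈ partCounts (r + 1) n) (j : Fin r) :
      (Fin.ofNat (n + 1) (σ j.succ) : ℕ) = σ j.succ :=
    mod_eq_of_lt (mem_range.1 (Fintype.mem_piFinset.1 (mem_filter.1 hσ).1 j.succ))
  refine sum_nbij' (fun σ j => Fin.ofNat (n + 1) (σ j.succ))
    (fun v => Fin.cons (n - ∑ j : Fin r, ((j : ℕ) + 2) * (v j : ℕ)) fun j => (v j : ℕ))
    ?_ ?_ ?_ ?_ ?_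
  · intro σ hσ
    simp only [mem_filter, mem_univ, true_and, hval σ hσ]
    have := hweight σ hσ
    omega
  · intro v hv
    simp only [mem_filter, mem_univ, true_and] at hv
    rw [mem_partCounts, partWeight_cons]
    omega
  · intro σ hσ
    have := hweight σ hσ
    conv_rhs => rw [← Fin.cons_self_tail σ]
    simp only [hval σ hσ]
    congr 1
    omega
  · intro v _
    funext j
    exact Fin.ext (by simp)
  · intro σ hσ
    have := hweight σ hσ
    conv_lhs => rw [← Fin.cons_self_tail σ]
    have hsplit : ∑ j : Fin r, (j + 2 : ℕ) * σ j.succ =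
        ∑ j : Fin r, (j + 1 : ℕ) * σ j.succ + ∑ j : Fin r, σ j.succ := by
      rw [← sum_add_distrib]
      exact sum_congr rfl fun j _ => by ring
    simp only [hval σ hσ, multinomial_univ_cons, Fin.tail, mul_comm (σ 0)!]
    congr 3 <;> omega

end Racci

/-- **Multinomial formula for the `r`-acci numbers (Corollary 5 of Sury).**
Let `F` satisfy `F_0 = 1`, `F_i = 0` for `i < 0`, and
`F_n = F_{n-1} + ⋯ + F_{n-r}` for `n ≥ 1`. Then `F_n` equals the sum, over all tuples of
non-negative integers `(i_2, …, i_r)` with `2i_2 + 3i_3 + ⋯ + r·i_r ≤ n`, of the multinomial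
coefficient `(n - i_2 - 2i_3 - ⋯ - (r-1)i_r)! / (i_2! ⋯ i_r! · (n - 2i_2 - ⋯ - r·i_r)!)`.
Here the tuple `(i_2, …, i_r)` is encoded as `v : Fin (r-1) → Fin (n+1)` with
`i_{j+2} = v j` (any `i_t` satisfying the constraint is at most `n`). -/
theorem racci_eq_multinomial_sum (r : ℕ) (hr : 1 ≤ r) (F : ℤ → ℤ) (hF0 : F 0 = 1)
    (hFneg : ∀ i : ℤ, i < 0 → F i = 0)
    (hrec : ∀ m : ℤ, 1 ≤ m → F m = ∑ t ∈ Finset.Icc 1 r, F (m - (t : ℤ)))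
    (n : ℕ) :
    F n = ∑ v ∈ Finset.univ.filter
        (fun v : Fin (r - 1) → Fin (n + 1) =>
          ∑ j : Fin (r - 1), ((j : ℕ) + 2) * (v j : ℕ) ≤ n),
      (((n - ∑ j : Fin (r - 1), ((j : ℕ) + 1) * (v j : ℕ)).factorial /
          ((∏ j : Fin (r - 1), ((v j : ℕ)).factorial) *
            (n - ∑ j : Fin (r - 1), ((j : ℕ) + 2) * (v j : ℕ)).factorial) : ℕ) : ℤ) := by
  obtain ⟨k, rfl⟩ : ∃ k, r = k + 1 := ⟨r - 1, by omega⟩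
  rw [Racci.eq_compositionCount (k + 1) F hF0 hFneg hrec n, Racci.compositionCount_succ, cast_sum]
  rfl
end

section
/- Let n ≥ 3 and let a, b be elements of a commutative ring (or indeterminates). Let S be the n×n matrix with all diagonal entries equal to a+b; entries S_{i,i+1} = a for 2 ≤ i ≤ n-1 and S_{1,2} = (-1)^{n+1} a; entries S_{i+1,i} = b for 2 ≤ i ≤ n-1 and S_{2,1} = (-1)^{n+1} b; corner entries S_{1,n} = b and S_{n,1} = a; and all other entries 0. Then det(S) = 2(a^n + b^n). -/
/-!
Let `M` be the cyclic shift matrix whose entry `(1, 2)` is replaced by `e = (-1)^(n+1)`.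
Since `e² = 1`, `M` is orthogonal, so `S = (a + b) I + a M + b Mᵀ = (a I + b Mᵀ)(I + M)`.
Expanding along the first column, where only two entries are nonzero and both minors are
triangular, gives `det (x I + y M) = x^n + (-1)^(n-1) e y^n = x^n + y^n`; hence
`det S = (a^n + b^n) · 2`.
-/

namespace Matrix

variable {R : Type*} [CommRing R] {n : ℕ}

def weightedCyclicShift (w : Fin n → R) : Matrix (Fin n) (Fin n) R :=
  of fun i j => if j = finRotate n i then w i else 0

lemma weightedCyclicShift_apply (w : Fin n → R) (i j : Fin n) :
    weightedCyclicShift w i j = if j = finRotate n i then w i else 0 :=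
  rfl

lemma transpose_weightedCyclicShift_mul_self {w : Fin n → R} (hw : ∀ i, w i * w i = 1) :
    (weightedCyclicShift w)ᵀ * weightedCyclicShift w = 1 := by
  ext i j
  rw [mul_apply, Finset.sum_eq_single ((finRotate n).symm i)]
  · rcases eq_or_ne i j with rfl | h
    · simp [weightedCyclicShift_apply, -finRotate_apply, -finRotate_symm_apply, hw]
    · simp [weightedCyclicShift_apply, -finRotate_apply, -finRotate_symm_apply, one_apply_ne h,
        h.symm]
  · intro k _ hk
    have : i ≠ finRotate n k := fun h => hk (by simp [-finRotate_apply, -finRotate_symm_apply, h])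
    simp [weightedCyclicShift_apply, -finRotate_apply, this]
  · simp

lemma det_smul_one_add_smul_weightedCyclicShift (w : Fin (n + 1) → R) (x y : R) :
    det (x • 1 + y • weightedCyclicShift w) =
      x ^ (n + 1) + (-1) ^ n * (∏ i, w i) * y ^ (n + 1) := by
  rcases n with _ | n
  · simp [det_unique, weightedCyclicShift_apply, mul_comm]
  set A := x • 1 + y • weightedCyclicShift w with hA
  have hA_apply (i j : Fin (n + 2)) :
      A i j = (if (i : ℕ) = j then x else 0) +
        y * if (j : ℕ) = if (i : ℕ) = n + 1 then 0 else (i : ℕ) + 1 then w i else 0 := by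
    simp only [hA, add_apply, smul_apply, one_apply, weightedCyclicShift_apply, Fin.ext_iff,
      coe_finRotate, Fin.val_last, smul_eq_mul, mul_ite, mul_one, mul_zero]
  have minor_zero : det (A.submatrix Fin.succ Fin.succ) = x ^ (n + 1) := by
    rw [det_of_isUpperTriangular]
    · rw [← Fin.prod_const]
      refine Finset.prod_congr rfl fun p _ => ?_
      simp only [submatrix_apply, hA_apply, Fin.val_succ]
      split_ifs <;> first | ring1 | omega | contradiction
    · intro p q hpq
      have : (q : ℕ) < p := hpq
      simp only [submatrix_apply, hA_apply, Fin.val_succ]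
      split_ifs <;> first | ring1 | omega | contradiction
  have minor_last : det (A.submatrix Fin.castSucc Fin.succ) =
      y ^ (n + 1) * ∏ i : Fin (n + 1), w i.castSucc := by
    rw [det_of_isLowerTriangular, ← Fin.prod_const, ← Finset.prod_mul_distrib]
    · refine Finset.prod_congr rfl fun p _ => ?_
      simp only [submatrix_apply, hA_apply, Fin.val_succ, Fin.val_castSucc]
      split_ifs <;> first | ring1 | omega
    · intro p q hpq
      have : (p : ℕ) < q := hpq
      simp only [submatrix_apply, hA_apply, Fin.val_succ, Fin.val_castSucc]
      split_ifs <;> first | ring1 | omega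
  have middle_zero (i : Fin n) : A i.castSucc.succ 0 = 0 := by
    simp only [hA_apply, Fin.val_succ, Fin.val_castSucc, Fin.val_zero]
    split_ifs <;> first | ring1 | omega | contradiction
  rw [det_succ_column_zero, Fin.sum_univ_succ, Fin.sum_univ_castSucc, Fin.succAbove_zero,
    Fin.succ_last, Fin.succAbove_last, minor_zero, minor_last, Fin.prod_univ_castSucc w]
  simp [middle_zero, hA_apply]
  ring

lemma smul_one_add_smul_transpose_mul_one_add {ι : Type*} [Fintype ι] [DecidableEq ι]
    {M : Matrix ι ι R} (hM : Mᵀ * M = 1) (a b : R) :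
    (a • 1 + b • Mᵀ) * (1 + M) = (a + b) • 1 + a • M + b • Mᵀ := by
  simp only [add_mul, mul_add, smul_mul, hM, mul_one, one_mul]
  module

-- The matrix of the theorem, with the sign `(-1) ^ (n + 1)` generalized to a twist `e`.
def twistedCirculant (n : ℕ) (a b e : R) : Matrix (Fin n) (Fin n) R :=
  of fun i j =>
    if (i : ℕ) = (j : ℕ) then a + b
    else if (i : ℕ) = 0 ∧ (j : ℕ) = n - 1 then b
    else if (i : ℕ) = n - 1 ∧ (j : ℕ) = 0 then a
    else if (j : ℕ) = (i : ℕ) + 1 then (if (i : ℕ) = 0 then e * a else a)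
    else if (i : ℕ) = (j : ℕ) + 1 then (if (j : ℕ) = 0 then e * b else b)
    else 0

lemma twistedCirculant_eq (hn : 2 ≤ n) (a b e : R) :
    twistedCirculant (n + 1) a b e =
      (a + b) • 1 + a • weightedCyclicShift (Pi.mulSingle 0 e) +
        b • (weightedCyclicShift (Pi.mulSingle 0 e))ᵀ := by
  ext i j
  simp only [twistedCirculant, of_apply, add_apply, smul_apply, one_apply, transpose_apply,
    weightedCyclicShift_apply, Pi.mulSingle_apply, Fin.ext_iff, coe_finRotate,
    Fin.val_last, Fin.val_zero, smul_eq_mul, add_tsub_cancel_right]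
  split_ifs <;> first | ring1 | omega

lemma det_twistedCirculant (hn : 2 ≤ n) (a b : R) {e : R} (he : e * e = 1) :
    det (twistedCirculant (n + 1) a b e) =
      (a ^ (n + 1) + (-1) ^ n * e * b ^ (n + 1)) * (1 + (-1) ^ n * e) := by
  set w : Fin (n + 1) → R := Pi.mulSingle 0 e
  set M := weightedCyclicShift w
  have hw (i : Fin (n + 1)) : w i * w i = 1 := by
    rcases eq_or_ne i 0 with rfl | hi <;> simp [w, *]
  have hprod : ∏ i, w i = e := Fintype.prod_pi_mulSingle' 0 e
  have factor : twistedCirculant (n + 1) a b e = (a • 1 + b • Mᵀ) * (1 + M) := by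
    rw [twistedCirculant_eq hn,
      smul_one_add_smul_transpose_mul_one_add (transpose_weightedCyclicShift_mul_self hw)]
  have det_one_add : det (1 + M) = 1 + (-1) ^ n * e := by
    simpa [hprod] using det_smul_one_add_smul_weightedCyclicShift w 1 1
  rw [factor, det_mul, ← det_transpose (a • 1 + b • Mᵀ), det_one_add]
  simp only [transpose_add, transpose_smul, transpose_one, transpose_transpose]
  rw [det_smul_one_add_smul_weightedCyclicShift, hprod]

end Matrix

/-- **A new determinantal identity.**
For `n ≥ 3` and elements `a, b` of a commutative ring, the `n × n` matrix `S` with diagonal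
entries `a + b`, superdiagonal entries `a` except `S_{1,2} = (-1)^{n+1} a`, subdiagonal
entries `b` except `S_{2,1} = (-1)^{n+1} b`, corner entries `S_{1,n} = b` and `S_{n,1} = a`,
and `0` elsewhere, satisfies `det S = 2(a^n + b^n)`. -/
theorem det_circulant_like_eq (R : Type*) [CommRing R] (n : ℕ) (hn : 3 ≤ n) (a b : R) :
    Matrix.det (fun i j : Fin n =>
      if (i : ℕ) = (j : ℕ) then a + b
      else if (i : ℕ) = 0 ∧ (j : ℕ) = n - 1 then b
      else if (i : ℕ) = n - 1 ∧ (j : ℕ) = 0 then a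
      else if (j : ℕ) = (i : ℕ) + 1 then
        (if (i : ℕ) = 0 then (-1 : R) ^ (n + 1) * a else a)
      else if (i : ℕ) = (j : ℕ) + 1 then
        (if (j : ℕ) = 0 then (-1 : R) ^ (n + 1) * b else b)
      else 0) = 2 * (a ^ n + b ^ n) := by
  obtain ⟨k, rfl⟩ : ∃ k, n = k + 1 := ⟨n - 1, by omega⟩
  have sign_cancel : (-1 : R) ^ k * (-1) ^ (k + 1 + 1) = 1 := by
    rw [← pow_add]
    exact Even.neg_one_pow ⟨k + 1, by ring⟩
  have sign_sq : (-1 : R) ^ (k + 1 + 1) * (-1) ^ (k + 1 + 1) = 1 := by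
    rw [← pow_add]
    exact Even.neg_one_pow ⟨_, rfl⟩
  change Matrix.det (Matrix.twistedCirculant (k + 1) a b ((-1) ^ (k + 1 + 1))) = _
  rw [Matrix.det_twistedCirculant (by omega) a b sign_sq, sign_cancel]
  ring
end

section
/- Let (ℓ_n) be the Lucas numbers, defined by ℓ_n = ℓ_{n-1} + ℓ_{n-2} for n ≥ 3 with ℓ_1 = 1, ℓ_2 = 3 (and ℓ_0 = 2). For n ≥ 3, let A be the n×n real matrix with all diagonal entries equal to 1; entries A_{i,i+1} = (1+√5)/2 for 2 ≤ i ≤ n-1 and A_{1,2} = (-1)^{n+1}(1+√5)/2; entries A_{i+1,i} = (1-√5)/2 for 2 ≤ i ≤ n-1 and A_{2,1} = (-1)^{n+1}(1-√5)/2; corner entries A_{1,n} = (1-√5)/2 and A_{n,1} = (1+√5)/2; and all other entries 0. Then ℓ_n = (1/2)·det(A). -/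
/-!
Write `A = 1 + φ • S + ψ • Sᵀ`, where `S` is the cyclic shift matrix whose entry in the first row
is twisted by `ε = (-1)^(n+1)`. Since `ε² = 1`, `S` is orthogonal, so by `φψ = -1` and `φ + ψ = 1`,
`A S = φ S² + S + ψ = φ (S + 1) (S - ψ²)`. Expanding along the first column,
`det (c + S) = cⁿ + (-1)^(n-1) ε = cⁿ + 1`; hence `det A = 2 φⁿ ((-ψ²)ⁿ + 1) = 2 (φⁿ + ψⁿ)`,
and `φⁿ + ψⁿ = ℓ_n` is Binet's formula for the Lucas numbers.
-/

open Matrix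

section TwistedShift

variable {R : Type*} [CommRing R]

def twistedShift (k : ℕ) (ε : R) : Matrix (Fin (k + 1)) (Fin (k + 1)) R :=
  diagonal (fun i => if i = 0 then ε else 1) * (finRotate (k + 1)).permMatrix R

variable {k : ℕ} {ε : R}

lemma twistedShift_apply (i j : Fin (k + 1)) :
    twistedShift k ε i j =
      if (j : ℕ) = (if (i : ℕ) = k then 0 else (i : ℕ) + 1) then (if (i : ℕ) = 0 then ε else 1)
      else 0 := by
  have hrot : finRotate (k + 1) i = j ↔ (j : ℕ) = (if (i : ℕ) = k then 0 else (i : ℕ) + 1) := by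
    simp only [coe_finRotate, Fin.ext_iff, Fin.val_last, eq_comm]
  simp only [twistedShift, diagonal_mul, PEquiv.toMatrix_apply, Equiv.toPEquiv_apply,
    Option.mem_def, Option.some_inj, hrot, Fin.ext_iff, Fin.val_zero, mul_ite, mul_one, mul_zero]

lemma twistedShift_transpose_mul_self (hε : ε * ε = 1) :
    (twistedShift k ε)ᵀ * twistedShift k ε = 1 := by
  have hD : diagonal (fun i : Fin (k + 1) => if i = 0 then ε else 1) *
      diagonal (fun i => if i = 0 then ε else 1) = 1 := by
    rw [diagonal_mul_diagonal, ← diagonal_one]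
    congr 1
    ext i
    split_ifs <;> simp [hε]
  rw [twistedShift, transpose_mul, Matrix.mul_assoc, ← Matrix.mul_assoc _ (diagonal _),
    diagonal_transpose, hD, Matrix.one_mul, transpose_permMatrix, ← permMatrix_mul, mul_inv_cancel,
    permMatrix_one]

lemma det_smul_one_add_twistedShift (hk : 1 ≤ k) (c : R) :
    (c • 1 + twistedShift k ε).det = c ^ (k + 1) + (-1) ^ k * ε := by
  set M := c • 1 + twistedShift k ε
  have hM (i j : Fin (k + 1)) : M i j = (if (i : ℕ) = j then c else 0) +
      if (j : ℕ) = (if (i : ℕ) = k then 0 else (i : ℕ) + 1) then (if (i : ℕ) = 0 then ε else 1)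
      else 0 := by
    simp only [M, Matrix.add_apply, Matrix.smul_apply, one_apply, twistedShift_apply, Fin.ext_iff,
      smul_eq_mul, mul_ite, mul_one, mul_zero]
  -- Expand along the first column: only rows `0` and `k` are nonzero there, and both
  -- complementary minors are triangular.
  have hcol (i : Fin (k + 1)) : M i 0 = if (i : ℕ) = 0 then c else if (i : ℕ) = k then 1 else 0 := by
    rw [hM, Fin.val_zero]
    split_ifs <;> first | ring1 | (exfalso; omega)
  have hupper : (M.submatrix Fin.succ Fin.succ).det = c ^ k := by
    rw [det_of_isUpperTriangular]
    · rw [Fintype.prod_congr _ (fun _ => c) fun i => ?_, Fin.prod_const]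
      simp only [submatrix_apply, hM, Fin.val_succ]
      split_ifs <;> first | ring1 | contradiction | (exfalso; omega)
    · intro i j (hij : (j : ℕ) < i)
      simp only [submatrix_apply, hM, Fin.val_succ]
      split_ifs <;> first | ring1 | contradiction | (exfalso; omega)
  have hlower : (M.submatrix Fin.castSucc Fin.succ).det = ε := by
    rw [det_of_isLowerTriangular]
    · rw [Fintype.prod_eq_single ⟨0, hk⟩ fun i hi => ?_]
      · simp only [submatrix_apply, hM, Fin.val_succ, Fin.val_castSucc]
        split_ifs <;> first | ring1 | contradiction | (exfalso; omega)
      · have hi : (i : ℕ) ≠ 0 := fun h => hi (Fin.ext h)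
        simp only [submatrix_apply, hM, Fin.val_succ, Fin.val_castSucc]
        split_ifs <;> first | ring1 | contradiction | (exfalso; omega)
    · intro i j (hij : (i : ℕ) < j)
      have := i.isLt
      simp only [submatrix_apply, hM, Fin.val_succ, Fin.val_castSucc]
      split_ifs <;> first | ring1 | contradiction | (exfalso; omega)
  have hne : (0 : Fin (k + 1)) ≠ Fin.last k := by
    rw [Ne, Fin.ext_iff, Fin.val_zero, Fin.val_last]
    omega
  have hrest (i : Fin (k + 1)) (hi : i ≠ 0 ∧ i ≠ Fin.last k) : M i 0 = 0 := by
    have hi0 : (i : ℕ) ≠ 0 := fun h => hi.1 (Fin.ext h)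
    have hik : (i : ℕ) ≠ k := fun h => hi.2 (Fin.ext h)
    rw [hcol, if_neg hi0, if_neg hik]
  rw [det_succ_column_zero, Fintype.sum_eq_add 0 (Fin.last k) hne
    (fun i hi => by rw [hrest i hi, mul_zero, zero_mul]), Fin.succAbove_zero, Fin.succAbove_last,
    hupper, hlower, hcol, hcol, Fin.val_zero, Fin.val_last, if_pos rfl, if_neg (by omega),
    if_pos rfl]
  ring

lemma one_add_smul_twistedShift_add_smul_transpose_apply (hk : 2 ≤ k) (a b : R)
    (i j : Fin (k + 1)) :
    (1 + a • twistedShift k ε + b • (twistedShift k ε)ᵀ) i j =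
      if (i : ℕ) = j then 1
      else if (i : ℕ) = 0 ∧ (j : ℕ) = k then b
      else if (i : ℕ) = k ∧ (j : ℕ) = 0 then a
      else if (j : ℕ) = i + 1 then (if (i : ℕ) = 0 then ε * a else a)
      else if (i : ℕ) = j + 1 then (if (j : ℕ) = 0 then ε * b else b)
      else 0 := by
  have := i.isLt
  have := j.isLt
  simp only [Matrix.add_apply, Matrix.smul_apply, one_apply, transpose_apply, twistedShift_apply,
    Fin.ext_iff, smul_eq_mul]
  split_ifs <;> first | ring1 | contradiction | (exfalso; omega)

lemma one_add_smul_add_smul_transpose_mul_self {n : Type*} [Fintype n] [DecidableEq n]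
    {S : Matrix n n R} (hS : Sᵀ * S = 1) {a b : R} (hab : a * b = -1) (h : a + b = 1) :
    (1 + a • S + b • Sᵀ) * S = a • ((S + 1) * (S - b ^ 2 • 1)) := by
  simp only [add_mul, mul_sub, Matrix.one_mul, smul_mul, hS, Matrix.mul_smul, Matrix.mul_one]
  linear_combination (norm := module) hab • (b • S + b • (1 : Matrix n n R)) - h • S

lemma det_one_add_smul_twistedShift_add_smul_transpose (hk : 1 ≤ k) {a b : R}
    (hab : a * b = -1) (h : a + b = 1) :
    (1 + a • twistedShift k ((-1 : R) ^ k) + b • (twistedShift k ((-1 : R) ^ k))ᵀ).det =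
      2 * (a ^ (k + 1) + b ^ (k + 1)) := by
  set S := twistedShift k ((-1 : R) ^ k)
  have hdet (c : R) : (c • 1 + S).det = c ^ (k + 1) + 1 := by
    rw [det_smul_one_add_twistedShift hk, ← pow_add, ← two_mul, pow_mul, neg_one_sq, one_pow]
  have hS : S.det = 1 := by simpa [zero_pow (Nat.succ_ne_zero k)] using hdet 0
  have hS1 : (S + 1).det = 2 := by simpa [add_comm, one_add_one_eq_two] using hdet 1
  have hSb : (S - b ^ 2 • 1).det = (-b ^ 2) ^ (k + 1) + 1 := by
    rw [sub_eq_neg_add, ← neg_smul, hdet]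
  have hε : (-1 : R) ^ k * (-1) ^ k = 1 := by
    rw [← mul_pow, neg_one_mul, neg_neg, one_pow]
  have key := congrArg det
    (one_add_smul_add_smul_transpose_mul_self (twistedShift_transpose_mul_self (k := k) hε) hab h)
  rw [det_mul, hS, mul_one, det_smul, det_mul, hS1, hSb, Fintype.card_fin] at key
  have hb : b ^ (k + 1) = a ^ (k + 1) * (-b ^ 2) ^ (k + 1) := by
    rw [← mul_pow]
    congr 1
    linear_combination b * hab
  rw [key, hb]
  ring

end TwistedShift

open Real
open scoped goldenRatio

lemma eq_goldenRatio_pow_add_goldenConj_pow {l : ℕ → ℝ} (hl0 : l 0 = 2) (hl1 : l 1 = 1)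
    (hl2 : l 2 = 3) (hrec : ∀ n, 3 ≤ n → l n = l (n - 1) + l (n - 2)) (m : ℕ) :
    l m = φ ^ m + ψ ^ m := by
  have hrec' (m : ℕ) : l (m + 2) = l (m + 1) + l m := by
    rcases m with _ | m
    · rw [hl2, hl1, hl0]
      norm_num
    · exact hrec (m + 3) (by omega)
  induction m using Nat.twoStepInduction with
  | zero => rw [hl0]; norm_num
  | one => rw [hl1, pow_one, pow_one, goldenRatio_add_goldenConj]
  | more m ih0 ih1 =>
    rw [hrec', ih0, ih1]
    linear_combination -φ ^ m * goldenRatio_sq - ψ ^ m * goldenConj_sq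

/-- **Determinantal formula for the Lucas numbers.**
Let `ℓ` satisfy `ℓ_0 = 2`, `ℓ_1 = 1`, `ℓ_2 = 3`, and `ℓ_n = ℓ_{n-1} + ℓ_{n-2}` for `n ≥ 3`.
For `n ≥ 3`, let `A` be the `n × n` real matrix with diagonal entries `1`, superdiagonal
entries `(1+√5)/2` except `A_{1,2} = (-1)^{n+1}(1+√5)/2`, subdiagonal entries `(1-√5)/2`
except `A_{2,1} = (-1)^{n+1}(1-√5)/2`, corner entries `A_{1,n} = (1-√5)/2` and
`A_{n,1} = (1+√5)/2`, and `0` elsewhere. Then `ℓ_n = (1/2) det A`. -/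
theorem lucas_eq_half_det (l : ℕ → ℝ) (hl0 : l 0 = 2) (hl1 : l 1 = 1) (hl2 : l 2 = 3)
    (hrec : ∀ n, 3 ≤ n → l n = l (n - 1) + l (n - 2))
    (n : ℕ) (hn : 3 ≤ n) :
    l n = (1 / 2) * Matrix.det (fun i j : Fin n =>
      if (i : ℕ) = (j : ℕ) then 1
      else if (i : ℕ) = 0 ∧ (j : ℕ) = n - 1 then (1 - Real.sqrt 5) / 2
      else if (i : ℕ) = n - 1 ∧ (j : ℕ) = 0 then (1 + Real.sqrt 5) / 2
      else if (j : ℕ) = (i : ℕ) + 1 then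
        (if (i : ℕ) = 0 then (-1 : ℝ) ^ (n + 1) * ((1 + Real.sqrt 5) / 2)
         else (1 + Real.sqrt 5) / 2)
      else if (i : ℕ) = (j : ℕ) + 1 then
        (if (j : ℕ) = 0 then (-1 : ℝ) ^ (n + 1) * ((1 - Real.sqrt 5) / 2)
         else (1 - Real.sqrt 5) / 2)
      else 0) := by
  obtain ⟨k, rfl⟩ : ∃ k, n = k + 1 := ⟨n - 1, by omega⟩
  have hε : (-1 : ℝ) ^ (k + 1 + 1) = (-1) ^ k := by ring
  set S := twistedShift k ((-1 : ℝ) ^ k)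
  calc l (k + 1) = 1 / 2 * (1 + φ • S + ψ • Sᵀ).det := by
        rw [eq_goldenRatio_pow_add_goldenConj_pow hl0 hl1 hl2 hrec,
          det_one_add_smul_twistedShift_add_smul_transpose (by omega) goldenRatio_mul_goldenConj
            goldenRatio_add_goldenConj]
        ring
    _ = _ := by
        congr 2
        ext i j
        rw [one_add_smul_twistedShift_add_smul_transpose_apply (by omega), Nat.add_sub_cancel, hε]
end
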